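/- For every n ≥ 0 (with the conventions P_{−1}^(1) := 0, a_{−1}^(1) := 0), the following two identities hold identically in x: (i) (x²−1)·P_n^(1)(x;ζ) = p̃_n·(x + q̃_n)·P_{n+1}^(0)(x;ζ) + r̃_n·P_n^(0)(x;ζ); and (ii) P_{n+1}^(0)(x;ζ) = (1/p̃_n)·(x − q̃_n)·P_n^(1)(x;ζ) − (a_{n−1}^(1)/a_n^(0))·r̃_n·P_{n−1}^(1)(x;ζ). -/
import Mathlib
set_option linter.unusedSectionVars false
set_option maxHeartbeats 1000000

open MeasureTheory Polynomial

noncomputable def besselK (n : ℕ) (ζ : ℝ) : ℝ :=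
  ∫ t in Set.Ioi (0 : ℝ), Real.cosh ((n : ℝ) * t) * Real.exp (-ζ * Real.cosh t)

noncomputable def Gfun (ζ : ℝ) : ℝ := besselK 2 ζ / besselK 1 ζ

noncomputable def wgt (ℓ : ℕ) (ζ x : ℝ) : ℝ :=
  (x ^ 2 - 1) ^ ((ℓ : ℝ) - 1 / 2) * Real.exp (-ζ * x) / besselK 1 ζ

namespace Stmt8Aux

noncomputable def Inn (w : ℝ → ℝ) (A B : Polynomial ℝ) : ℝ :=
  ∫ x in Set.Ioi (1 : ℝ), A.eval x * B.eval x * w x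

lemma inn_congr {w : ℝ → ℝ} {A B A' B' : Polynomial ℝ}
    (h : ∀ x : ℝ, A.eval x * B.eval x = A'.eval x * B'.eval x) :
    Inn w A B = Inn w A' B' := by
  unfold Inn
  congr 1
  funext x
  rw [h]

lemma inn_comm (w : ℝ → ℝ) (A B : Polynomial ℝ) : Inn w A B = Inn w B A :=
  inn_congr fun x => by ring

lemma inn_swap (w : ℝ → ℝ) (A B C' : Polynomial ℝ) :
    Inn w (A * B) C' = Inn w (A * C') B :=
  inn_congr fun x => by simp only [Polynomial.eval_mul]; ring

lemma inn_smul (w : ℝ → ℝ) (a : ℝ) (A B : Polynomial ℝ) :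
    Inn w (Polynomial.C a * A) B = a * Inn w A B := by
  unfold Inn
  rw [← MeasureTheory.integral_const_mul]
  congr 1
  funext x
  simp only [Polynomial.eval_mul, Polynomial.eval_C]
  ring

lemma inn_sub (w : ℝ → ℝ) (A B Cp : Polynomial ℝ)
    (hA : IntegrableOn (fun x => A.eval x * Cp.eval x * w x) (Set.Ioi 1))
    (hB : IntegrableOn (fun x => B.eval x * Cp.eval x * w x) (Set.Ioi 1)) :
    Inn w (A - B) Cp = Inn w A Cp - Inn w B Cp := by
  unfold Inn
  rw [← MeasureTheory.integral_sub hA hB]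
  congr 1
  funext x
  simp only [Polynomial.eval_sub]
  ring

lemma inn_add (w : ℝ → ℝ) (A B Cp : Polynomial ℝ)
    (hA : IntegrableOn (fun x => A.eval x * Cp.eval x * w x) (Set.Ioi 1))
    (hB : IntegrableOn (fun x => B.eval x * Cp.eval x * w x) (Set.Ioi 1)) :
    Inn w (A + B) Cp = Inn w A Cp + Inn w B Cp := by
  unfold Inn
  rw [← MeasureTheory.integral_add hA hB]
  congr 1
  funext x
  simp only [Polynomial.eval_add]
  ring

section Family

variable (P : ℕ → Polynomial ℝ) (lc : ℕ → ℝ) (w : ℝ → ℝ)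
variable (hdeg : ∀ n, (P n).natDegree = n) (hlc : ∀ n, (P n).leadingCoeff = lc n)
  (hpos : ∀ n, 0 < lc n)
  (hw_cont : ContinuousOn w (Set.Ioi 1))
  (hw_nonneg : ∀ x ∈ Set.Ioi (1 : ℝ), 0 ≤ w x)
  (horth : ∀ m n, Inn w (P m) (P n) = if m = n then (1 : ℝ) else 0)

include hdeg hlc hpos hw_cont hw_nonneg horth

lemma aesm (A B : Polynomial ℝ) :
    AEStronglyMeasurable (fun x => A.eval x * B.eval x * w x)
      (volume.restrict (Set.Ioi 1)) := by
  apply ContinuousOn.aestronglyMeasurable _ measurableSet_Ioi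
  exact (A.continuous.continuousOn.mul B.continuous.continuousOn).mul hw_cont

lemma integ_diag (j : ℕ) :
    IntegrableOn (fun x => (P j).eval x * (P j).eval x * w x) (Set.Ioi 1) := by
  by_contra h
  have h0 : Inn w (P j) (P j) = 0 := integral_undef h
  rw [horth j j, if_pos rfl] at h0
  norm_num at h0

lemma integ_pair (j k : ℕ) :
    IntegrableOn (fun x => (P j).eval x * (P k).eval x * w x) (Set.Ioi 1) := by
  have hj := integ_diag P lc w hdeg hlc hpos hw_cont hw_nonneg horth j
  have hk := integ_diag P lc w hdeg hlc hpos hw_cont hw_nonneg horth k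
  have hg : IntegrableOn (fun x => (2 : ℝ)⁻¹ *
      ((P j).eval x * (P j).eval x * w x + (P k).eval x * (P k).eval x * w x))
      (Set.Ioi 1) := (hj.add hk).const_mul _
  refine hg.mono' (aesm P lc w hdeg hlc hpos hw_cont hw_nonneg horth _ _) ?_
  rw [ae_restrict_iff' measurableSet_Ioi]
  refine ae_of_all _ fun x hx => ?_
  have hwx := hw_nonneg x hx
  have h1 : |(P j).eval x * (P k).eval x| ≤
      (2 : ℝ)⁻¹ * ((P j).eval x * (P j).eval x + (P k).eval x * (P k).eval x) := by
    rcases abs_cases ((P j).eval x * (P k).eval x) with ⟨h, _⟩ | ⟨h, _⟩ <;>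
      nlinarith [sq_nonneg ((P j).eval x - (P k).eval x),
        sq_nonneg ((P j).eval x + (P k).eval x)]
  have h2 : ‖(P j).eval x * (P k).eval x * w x‖ =
      |(P j).eval x * (P k).eval x| * w x := by
    rw [Real.norm_eq_abs, abs_mul, abs_of_nonneg hwx]
  rw [h2]
  nlinarith [mul_le_mul_of_nonneg_right h1 hwx]

lemma coeff_self (n : ℕ) : (P n).coeff n = lc n := by
  have h := hlc n
  rwa [Polynomial.leadingCoeff, hdeg n] at h

lemma span : ∀ (n : ℕ) (Q : Polynomial ℝ), Q.natDegree ≤ n →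
    ∃ c : ℕ → ℝ, Q = ∑ k ∈ Finset.range (n + 1), Polynomial.C (c k) * P k := by
  intro n
  induction n with
  | zero =>
    intro Q hQ
    refine ⟨fun _ => Q.coeff 0 / lc 0, ?_⟩
    have hP0 : P 0 = Polynomial.C (lc 0) := by
      have h1 : P 0 = Polynomial.C ((P 0).coeff 0) :=
        Polynomial.eq_C_of_natDegree_le_zero (le_of_eq (hdeg 0))
      rw [h1, coeff_self P lc w hdeg hlc hpos hw_cont hw_nonneg horth 0]
    rw [Finset.sum_range_one, hP0, ← Polynomial.C_mul,
      div_mul_cancel₀ _ (ne_of_gt (hpos 0))]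
    exact Polynomial.eq_C_of_natDegree_le_zero hQ
  | succ n ih =>
    intro Q hQ
    set d := Q.coeff (n + 1) / lc (n + 1) with hd
    have hcoeff : ∀ m, n < m → (Q - Polynomial.C d * P (n + 1)).coeff m = 0 := by
      intro m hm
      rcases eq_or_lt_of_le (Nat.succ_le_of_lt hm) with h | h
      · rw [Polynomial.coeff_sub, Polynomial.coeff_C_mul, ← h,
          coeff_self P lc w hdeg hlc hpos hw_cont hw_nonneg horth (n + 1), hd,
          div_mul_cancel₀ _ (ne_of_gt (hpos (n + 1))), sub_self]
      · rw [Polynomial.coeff_sub, Polynomial.coeff_C_mul,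
          Polynomial.coeff_eq_zero_of_natDegree_lt (lt_of_le_of_lt hQ h),
          Polynomial.coeff_eq_zero_of_natDegree_lt (by rw [hdeg]; exact h),
          mul_zero, sub_self]
    have hdeg' : (Q - Polynomial.C d * P (n + 1)).natDegree ≤ n :=
      Polynomial.natDegree_le_iff_coeff_eq_zero.mpr hcoeff
    obtain ⟨c, hc⟩ := ih _ hdeg'
    classical
    refine ⟨fun k => if k = n + 1 then d else c k, ?_⟩
    have hterm : Polynomial.C ((fun k => if k = n + 1 then d else c k) (n + 1)) * P (n + 1)
        = Polynomial.C d * P (n + 1) := by simp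
    have hsum : ∑ k ∈ Finset.range (n + 1),
        Polynomial.C ((fun k => if k = n + 1 then d else c k) k) * P k
        = ∑ k ∈ Finset.range (n + 1), Polynomial.C (c k) * P k := by
      apply Finset.sum_congr rfl
      intro k hk
      have hne : k ≠ n + 1 := by have := Finset.mem_range.mp hk; omega
      simp [hne]
    rw [Finset.sum_range_succ, hterm, hsum, ← hc]
    ring

lemma inn_sum_left (s : Finset ℕ) (c : ℕ → ℝ) (j : ℕ) :
    Inn w (∑ k ∈ s, Polynomial.C (c k) * P k) (P j)
      = ∑ k ∈ s, c k * Inn w (P k) (P j) := by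
  have h1 : Inn w (∑ k ∈ s, Polynomial.C (c k) * P k) (P j)
      = ∫ x in Set.Ioi (1 : ℝ), ∑ k ∈ s, c k * ((P k).eval x * (P j).eval x * w x) := by
    unfold Inn
    congr 1
    funext x
    rw [Polynomial.eval_finset_sum, Finset.sum_mul, Finset.sum_mul]
    apply Finset.sum_congr rfl
    intro k _
    simp only [Polynomial.eval_mul, Polynomial.eval_C]
    ring
  rw [h1, MeasureTheory.integral_finset_sum s
    (fun k _ => ((integ_pair P lc w hdeg hlc hpos hw_cont hw_nonneg horth k j).const_mul (c k)))]
  apply Finset.sum_congr rfl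
  intro k _
  exact MeasureTheory.integral_const_mul _ _

lemma inn_proj (Q : Polynomial ℝ) (j : ℕ) (hQ : Q.natDegree ≤ j) :
    Inn w Q (P j) = Q.coeff j / lc j := by
  obtain ⟨c, hc⟩ := span P lc w hdeg hlc hpos hw_cont hw_nonneg horth j Q hQ
  have hsum : ∑ k ∈ Finset.range (j + 1), c k * Inn w (P k) (P j) = c j := by
    rw [Finset.sum_eq_single j]
    · rw [horth, if_pos rfl, mul_one]
    · intro k _ hkj
      rw [horth, if_neg hkj, mul_zero]
    · intro h
      exact absurd (Finset.self_mem_range_succ j) h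
  have h2 : Inn w Q (P j) = c j := by
    rw [hc, inn_sum_left P lc w hdeg hlc hpos hw_cont hw_nonneg horth, hsum]
  have hco : Q.coeff j = c j * lc j := by
    rw [hc, Polynomial.finset_sum_coeff]
    rw [Finset.sum_eq_single j]
    · rw [Polynomial.coeff_C_mul, coeff_self P lc w hdeg hlc hpos hw_cont hw_nonneg horth]
    · intro k hk hkj
      rw [Polynomial.coeff_C_mul,
        Polynomial.coeff_eq_zero_of_natDegree_lt
          (by rw [hdeg]; exact lt_of_le_of_ne (by have := Finset.mem_range.mp hk; omega) hkj),
        mul_zero]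
    · intro h
      exact absurd (Finset.self_mem_range_succ j) h
  rw [h2, hco, mul_div_cancel_right₀ _ (ne_of_gt (hpos j))]

lemma inn_zero (n : ℕ) (Q : Polynomial ℝ) (hQ : Q.natDegree ≤ n)
    (h : ∀ k, k ≤ n → Inn w Q (P k) = 0) : Q = 0 := by
  obtain ⟨c, hc⟩ := span P lc w hdeg hlc hpos hw_cont hw_nonneg horth n Q hQ
  have hck : ∀ k, k ≤ n → c k = 0 := by
    intro k hk
    have h0 := h k hk
    rw [hc, inn_sum_left P lc w hdeg hlc hpos hw_cont hw_nonneg horth] at h0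
    rw [Finset.sum_eq_single k] at h0
    · rwa [horth, if_pos rfl, mul_one] at h0
    · intro b _ hbk
      rw [horth, if_neg hbk, mul_zero]
    · intro hkn
      exact absurd (Finset.mem_range.mpr (by omega)) hkn
  rw [hc]
  apply Finset.sum_eq_zero
  intro k hk
  rw [hck k (by have := Finset.mem_range.mp hk; omega)]
  simp

lemma integ_poly (Q : Polynomial ℝ) (j : ℕ) :
    IntegrableOn (fun x => Q.eval x * (P j).eval x * w x) (Set.Ioi 1) := by
  obtain ⟨c, hc⟩ := span P lc w hdeg hlc hpos hw_cont hw_nonneg horth Q.natDegree Q le_rfl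
  rw [hc]
  have h1 : (fun x => (∑ k ∈ Finset.range (Q.natDegree + 1),
        Polynomial.C (c k) * P k).eval x * (P j).eval x * w x)
      = fun x => ∑ k ∈ Finset.range (Q.natDegree + 1),
        c k * ((P k).eval x * (P j).eval x * w x) := by
    funext x
    rw [Polynomial.eval_finset_sum, Finset.sum_mul, Finset.sum_mul]
    apply Finset.sum_congr rfl
    intro k _
    simp only [Polynomial.eval_mul, Polynomial.eval_C]
    ring
  rw [h1]
  exact MeasureTheory.integrable_finset_sum _
    (fun k _ => (integ_pair P lc w hdeg hlc hpos hw_cont hw_nonneg horth k j).const_mul (c k))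

end Family

lemma wgt_nonneg (ℓ : ℕ) (ζ : ℝ) : ∀ x ∈ Set.Ioi (1 : ℝ), 0 ≤ wgt ℓ ζ x := by
  intro x hx
  have hx1 : (1 : ℝ) < x := hx
  unfold wgt
  apply div_nonneg
  · exact mul_nonneg (Real.rpow_nonneg (by nlinarith) _) (Real.exp_nonneg _)
  · unfold besselK
    apply setIntegral_nonneg measurableSet_Ioi
    intro t _
    exact mul_nonneg (Real.cosh_pos _).le (Real.exp_nonneg _)

lemma wgt_contOn (ℓ : ℕ) (ζ : ℝ) : ContinuousOn (wgt ℓ ζ) (Set.Ioi 1) := by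
  unfold wgt
  apply ContinuousOn.div_const
  apply ContinuousOn.mul
  · intro x hx
    have hx1 : (1 : ℝ) < x := hx
    have hbase : ContinuousAt (fun y : ℝ => y ^ 2 - 1) x := by fun_prop
    have h := Real.continuousAt_rpow_const (x ^ 2 - 1) ((ℓ : ℝ) - 1 / 2)
      (Or.inl (by nlinarith))
    have h2 : ContinuousAt ((fun b : ℝ => b ^ ((ℓ : ℝ) - 1 / 2)) ∘ (fun y : ℝ => y ^ 2 - 1)) x :=
      ContinuousAt.comp h hbase
    exact h2.continuousWithinAt
  · exact (Real.continuous_exp.comp (by fun_prop)).continuousOn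

lemma rpow_half_shift {b : ℝ} (hb : 0 < b) :
    b ^ ((1 : ℝ) - 1 / 2) = b * b ^ ((0 : ℝ) - 1 / 2) := by
  rw [show ((1 : ℝ) - 1 / 2) = 1 + ((0 : ℝ) - 1 / 2) by ring, Real.rpow_add hb,
    Real.rpow_one]

lemma bridge (ζ : ℝ) (A B : Polynomial ℝ) :
    Inn (wgt 1 ζ) A B = Inn (wgt 0 ζ) (((X : Polynomial ℝ) ^ 2 - 1) * A) B := by
  unfold Inn
  refine setIntegral_congr_fun measurableSet_Ioi fun x hx => ?_
  have hx1 : (1 : ℝ) < x := hx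
  have hb : (0 : ℝ) < x ^ 2 - 1 := by nlinarith
  simp only [Polynomial.eval_mul, Polynomial.eval_sub, Polynomial.eval_pow,
    Polynomial.eval_X, Polynomial.eval_one]
  unfold wgt
  push_cast
  rw [rpow_half_shift hb]
  ring

-- coefficient of product helpers
lemma coeff_X2_mul (Q : Polynomial ℝ) (m : ℕ) :
    (((X : Polynomial ℝ) ^ 2 - 1) * Q).coeff m
      = (if 2 ≤ m then Q.coeff (m - 2) else 0) - Q.coeff m := by
  rw [sub_mul, one_mul, Polynomial.coeff_sub, mul_comm, Polynomial.coeff_mul_X_pow']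

lemma coeff_X_add_mul (q : ℝ) (Q : Polynomial ℝ) (m : ℕ) :
    (((X : Polynomial ℝ) + C q) * Q).coeff (m + 1)
      = Q.coeff m + q * Q.coeff (m + 1) := by
  rw [add_mul, Polynomial.coeff_add, Polynomial.coeff_X_mul, Polynomial.coeff_C_mul]

lemma coeff_X_sub_mul (q : ℝ) (Q : Polynomial ℝ) (m : ℕ) :
    (((X : Polynomial ℝ) - C q) * Q).coeff (m + 1)
      = Q.coeff m - q * Q.coeff (m + 1) := by
  rw [sub_mul, Polynomial.coeff_sub, Polynomial.coeff_X_mul, Polynomial.coeff_C_mul]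

lemma coeff_X_mul' (Q : Polynomial ℝ) (m : ℕ) :
    ((X : Polynomial ℝ) * Q).coeff (m + 1) = Q.coeff m :=
  Polynomial.coeff_X_mul _ _

lemma natDegree_X2_sub_one : ((X : Polynomial ℝ) ^ 2 - 1).natDegree ≤ 2 := by
  refine le_trans (Polynomial.natDegree_sub_le _ _) ?_
  simp [Polynomial.natDegree_X_pow, Polynomial.natDegree_one]

lemma coeff_sub_one (P : ℕ → Polynomial ℝ) (lc : ℕ → ℝ) (z : ℕ → ℕ → ℝ)
    (hzfac : ∀ n, P n = C (lc n) * ∏ i ∈ Finset.Icc 1 n, (X - C (z n i))) (n : ℕ) :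
    (P (n + 1)).coeff n = -(lc (n + 1)) * ∑ i ∈ Finset.Icc 1 (n + 1), z (n + 1) i := by
  rw [hzfac (n + 1), Polynomial.coeff_C_mul]
  have hmon : ∀ i ∈ Finset.Icc 1 (n + 1), ((X : Polynomial ℝ) - C (z (n + 1) i)).Monic :=
    fun i _ => Polynomial.monic_X_sub_C _
  have hdR : (∏ i ∈ Finset.Icc 1 (n + 1), ((X : Polynomial ℝ) - C (z (n + 1) i))).natDegree
      = n + 1 := by
    rw [Polynomial.natDegree_prod_of_monic _ _ hmon]
    simp [Polynomial.natDegree_X_sub_C]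
  have hnext := Polynomial.prod_X_sub_C_nextCoeff (s := Finset.Icc 1 (n + 1))
    (f := z (n + 1))
  rw [Polynomial.nextCoeff_of_natDegree_pos (by rw [hdR]; omega), hdR] at hnext
  simp only [Nat.add_sub_cancel] at hnext
  rw [hnext]
  ring

end Stmt8Aux

theorem stmt8
    (ζ : ℝ) (hζ : 0 < ζ)
    (P0 P1 : ℕ → Polynomial ℝ) (lc0 lc1 : ℕ → ℝ)
    (hdeg0 : ∀ n, (P0 n).natDegree = n)
    (hdeg1 : ∀ n, (P1 n).natDegree = n)
    (hlc0 : ∀ n, (P0 n).leadingCoeff = lc0 n)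
    (hlc1 : ∀ n, (P1 n).leadingCoeff = lc1 n)
    (hlc0pos : ∀ n, 0 < lc0 n)
    (hlc1pos : ∀ n, 0 < lc1 n)
    (horth0 : ∀ m n, (∫ x in Set.Ioi (1 : ℝ),
        (P0 m).eval x * (P0 n).eval x * wgt 0 ζ x) = if m = n then (1 : ℝ) else 0)
    (horth1 : ∀ m n, (∫ x in Set.Ioi (1 : ℝ),
        (P1 m).eval x * (P1 n).eval x * wgt 1 ζ x) = if m = n then (1 : ℝ) else 0)
    (z0 z1 : ℕ → ℕ → ℝ)
    (hzfac0 : ∀ n, P0 n = C (lc0 n) * ∏ i ∈ Finset.Icc 1 n, (X - C (z0 n i)))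
    (hzfac1 : ∀ n, P1 n = C (lc1 n) * ∏ i ∈ Finset.Icc 1 n, (X - C (z1 n i)))
    (hzgt0 : ∀ n i, 1 ≤ i → i ≤ n → 1 < z0 n i)
    (hzgt1 : ∀ n i, 1 ≤ i → i ≤ n → 1 < z1 n i)
    (hzmono0 : ∀ n i j, 1 ≤ i → i < j → j ≤ n → z0 n i < z0 n j)
    (hzmono1 : ∀ n i j, 1 ≤ i → i < j → j ≤ n → z1 n i < z1 n j)
    (a0 a1 pt qt rt : ℕ → ℝ)
    (ha0 : ∀ n, a0 n = lc0 n / lc0 (n + 1))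
    (ha1 : ∀ n, a1 n = lc1 n / lc1 (n + 1))
    (hpt : ∀ n, pt n = lc1 n / lc0 (n + 1))
    (hqt : ∀ n, qt n = (∑ i ∈ Finset.Icc 1 (n + 1), z0 (n + 1) i)
      - ∑ i ∈ Finset.Icc 1 n, z1 n i)
    (hrt : ∀ n, rt n = (lc0 n / lc1 n) * (1 - (pt n) ^ 2)) :
    (∀ n, (X ^ 2 - 1) * P1 n =
      C (pt n) * (X + C (qt n)) * P0 (n + 1) + C (rt n) * P0 n) ∧
    (P0 1 = C (1 / pt 0) * (X - C (qt 0)) * P1 0) ∧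
    (∀ n, P0 (n + 2) =
      C (1 / pt (n + 1)) * (X - C (qt (n + 1))) * P1 (n + 1)
        - C (a1 n / a0 (n + 1) * rt (n + 1)) * P1 n) := by
  classical
  have hc0 := Stmt8Aux.wgt_contOn 0 ζ
  have hc1 := Stmt8Aux.wgt_contOn 1 ζ
  have hn0 := Stmt8Aux.wgt_nonneg 0 ζ
  have hn1 := Stmt8Aux.wgt_nonneg 1 ζ
  have horth0' : ∀ m n, Stmt8Aux.Inn (wgt 0 ζ) (P0 m) (P0 n)
      = if m = n then (1 : ℝ) else 0 := horth0
  have horth1' : ∀ m n, Stmt8Aux.Inn (wgt 1 ζ) (P1 m) (P1 n)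
      = if m = n then (1 : ℝ) else 0 := horth1
  have proj0 : ∀ (Q : Polynomial ℝ) (j : ℕ), Q.natDegree ≤ j →
      Stmt8Aux.Inn (wgt 0 ζ) Q (P0 j) = Q.coeff j / lc0 j :=
    fun Q j h => Stmt8Aux.inn_proj P0 lc0 (wgt 0 ζ) hdeg0 hlc0 hlc0pos hc0 hn0 horth0' Q j h
  have proj1 : ∀ (Q : Polynomial ℝ) (j : ℕ), Q.natDegree ≤ j →
      Stmt8Aux.Inn (wgt 1 ζ) Q (P1 j) = Q.coeff j / lc1 j :=
    fun Q j h => Stmt8Aux.inn_proj P1 lc1 (wgt 1 ζ) hdeg1 hlc1 hlc1pos hc1 hn1 horth1' Q j h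
  have int0 : ∀ (Q : Polynomial ℝ) (j : ℕ),
      IntegrableOn (fun x => Q.eval x * (P0 j).eval x * wgt 0 ζ x) (Set.Ioi 1) :=
    fun Q j => Stmt8Aux.integ_poly P0 lc0 (wgt 0 ζ) hdeg0 hlc0 hlc0pos hc0 hn0 horth0' Q j
  have int1 : ∀ (Q : Polynomial ℝ) (j : ℕ),
      IntegrableOn (fun x => Q.eval x * (P1 j).eval x * wgt 1 ζ x) (Set.Ioi 1) :=
    fun Q j => Stmt8Aux.integ_poly P1 lc1 (wgt 1 ζ) hdeg1 hlc1 hlc1pos hc1 hn1 horth1' Q j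
  have zero0 : ∀ (n : ℕ) (Q : Polynomial ℝ), Q.natDegree ≤ n →
      (∀ k, k ≤ n → Stmt8Aux.Inn (wgt 0 ζ) Q (P0 k) = 0) → Q = 0 :=
    fun n Q h1 h2 => Stmt8Aux.inn_zero P0 lc0 (wgt 0 ζ) hdeg0 hlc0 hlc0pos hc0 hn0 horth0' n Q h1 h2
  have zero1 : ∀ (n : ℕ) (Q : Polynomial ℝ), Q.natDegree ≤ n →
      (∀ k, k ≤ n → Stmt8Aux.Inn (wgt 1 ζ) Q (P1 k) = 0) → Q = 0 :=
    fun n Q h1 h2 => Stmt8Aux.inn_zero P1 lc1 (wgt 1 ζ) hdeg1 hlc1 hlc1pos hc1 hn1 horth1' n Q h1 h2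
  have cs0 : ∀ n, (P0 n).coeff n = lc0 n :=
    fun n => Stmt8Aux.coeff_self P0 lc0 (wgt 0 ζ) hdeg0 hlc0 hlc0pos hc0 hn0 horth0' n
  have cs1 : ∀ n, (P1 n).coeff n = lc1 n :=
    fun n => Stmt8Aux.coeff_self P1 lc1 (wgt 1 ζ) hdeg1 hlc1 hlc1pos hc1 hn1 horth1' n
  have csub0 : ∀ n, (P0 (n + 1)).coeff n
      = -(lc0 (n + 1)) * ∑ i ∈ Finset.Icc 1 (n + 1), z0 (n + 1) i :=
    Stmt8Aux.coeff_sub_one P0 lc0 z0 hzfac0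
  have csub1 : ∀ n, (P1 (n + 1)).coeff n
      = -(lc1 (n + 1)) * ∑ i ∈ Finset.Icc 1 (n + 1), z1 (n + 1) i :=
    Stmt8Aux.coeff_sub_one P1 lc1 z1 hzfac1
  have hlc0ne : ∀ n, lc0 n ≠ 0 := fun n => ne_of_gt (hlc0pos n)
  have hlc1ne : ∀ n, lc1 n ≠ 0 := fun n => ne_of_gt (hlc1pos n)
  -- ==================== Part (i) ====================
  have key1 : ∀ n, (X ^ 2 - 1) * P1 n =
      C (pt n) * (X + C (qt n)) * P0 (n + 1) + C (rt n) * P0 n := by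
    intro n
    have hdA1 : ((X ^ 2 - 1 : Polynomial ℝ) * P1 n).natDegree ≤ n + 2 := by
      refine le_trans (Polynomial.natDegree_mul_le) ?_
      have h1 := Stmt8Aux.natDegree_X2_sub_one
      rw [hdeg1 n]
      omega
    have hdA2 : (((X : Polynomial ℝ) + C (qt n)) * P0 (n + 1)).natDegree ≤ n + 2 := by
      refine le_trans (Polynomial.natDegree_mul_le) ?_
      rw [Polynomial.natDegree_X_add_C, hdeg0 (n + 1)]
      omega
    have hdegD : ((X ^ 2 - 1) * P1 n - C (pt n) * (((X : Polynomial ℝ) + C (qt n)) * P0 (n + 1))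
        - C (rt n) * P0 n).natDegree ≤ n := by
      apply Polynomial.natDegree_le_iff_coeff_eq_zero.mpr
      intro m hm
      rw [Polynomial.coeff_sub, Polynomial.coeff_sub, Polynomial.coeff_C_mul,
        Polynomial.coeff_C_mul]
      rcases (by omega : m = n + 1 ∨ m = n + 2 ∨ n + 3 ≤ m) with h | h | h
      · subst h
        have e1 : ((X ^ 2 - 1 : Polynomial ℝ) * P1 n).coeff (n + 1)
            = -(lc1 n) * ∑ i ∈ Finset.Icc 1 n, z1 n i := by
          rw [Stmt8Aux.coeff_X2_mul]
          cases n with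
          | zero =>
            rw [if_neg (by omega),
              Polynomial.coeff_eq_zero_of_natDegree_lt (by rw [hdeg1 0]; omega)]
            rw [show Finset.Icc 1 0 = (∅ : Finset ℕ) from Finset.Icc_eq_empty (by omega)]
            simp
          | succ k =>
            rw [if_pos (by omega), show k + 1 + 1 - 2 = k from by omega, csub1 k,
              Polynomial.coeff_eq_zero_of_natDegree_lt (by rw [hdeg1 (k + 1)]; omega)]
            ring
        have e2 : (((X : Polynomial ℝ) + C (qt n)) * P0 (n + 1)).coeff (n + 1)
            = -(lc0 (n + 1)) * (∑ i ∈ Finset.Icc 1 (n + 1), z0 (n + 1) i)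
              + qt n * lc0 (n + 1) := by
          rw [Stmt8Aux.coeff_X_add_mul, csub0 n, cs0 (n + 1)]
          try ring
        have e3 : (P0 n).coeff (n + 1) = 0 :=
          Polynomial.coeff_eq_zero_of_natDegree_lt (by rw [hdeg0 n]; omega)
        rw [e1, e2, e3, hqt n, hpt n]
        field_simp [hlc0ne, hlc1ne]
        try ring
      · subst h
        have e1 : ((X ^ 2 - 1 : Polynomial ℝ) * P1 n).coeff (n + 2) = lc1 n := by
          rw [Stmt8Aux.coeff_X2_mul, if_pos (by omega),
            show n + 2 - 2 = n from by omega, cs1 n,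
            Polynomial.coeff_eq_zero_of_natDegree_lt (by rw [hdeg1 n]; omega)]
          ring
        have e2 : (((X : Polynomial ℝ) + C (qt n)) * P0 (n + 1)).coeff (n + 2) = lc0 (n + 1) := by
          rw [show n + 2 = n + 1 + 1 from by omega, Stmt8Aux.coeff_X_add_mul, cs0 (n + 1),
            Polynomial.coeff_eq_zero_of_natDegree_lt (by rw [hdeg0 (n + 1)]; omega)]
          ring
        have e3 : (P0 n).coeff (n + 2) = 0 :=
          Polynomial.coeff_eq_zero_of_natDegree_lt (by rw [hdeg0 n]; omega)
        rw [e1, e2, e3, hpt n]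
        field_simp [hlc0ne, hlc1ne]
        try ring
      · rw [Polynomial.coeff_eq_zero_of_natDegree_lt (lt_of_le_of_lt hdA1 (by omega)),
          Polynomial.coeff_eq_zero_of_natDegree_lt (lt_of_le_of_lt hdA2 (by omega)),
          Polynomial.coeff_eq_zero_of_natDegree_lt (by rw [hdeg0 n]; omega)]
        ring
    have hDk : ∀ k, k ≤ n → Stmt8Aux.Inn (wgt 0 ζ)
        ((X ^ 2 - 1) * P1 n - C (pt n) * (((X : Polynomial ℝ) + C (qt n)) * P0 (n + 1))
          - C (rt n) * P0 n) (P0 k) = 0 := by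
      intro k hk
      rw [Stmt8Aux.inn_sub (wgt 0 ζ) _ (C (rt n) * P0 n) (P0 k) (int0 _ k) (int0 _ k),
        Stmt8Aux.inn_sub (wgt 0 ζ) _ (C (pt n) * (((X : Polynomial ℝ) + C (qt n)) * P0 (n + 1)))
          (P0 k) (int0 _ k) (int0 _ k),
        Stmt8Aux.inn_smul, Stmt8Aux.inn_smul]
      have T1 : Stmt8Aux.Inn (wgt 0 ζ) ((X ^ 2 - 1) * P1 n) (P0 k)
          = (P0 k).coeff n / lc1 n := by
        rw [← Stmt8Aux.bridge ζ (P1 n) (P0 k), Stmt8Aux.inn_comm]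
        exact proj1 (P0 k) n (by rw [hdeg0 k]; exact hk)
      have T2 : Stmt8Aux.Inn (wgt 0 ζ) (((X : Polynomial ℝ) + C (qt n)) * P0 (n + 1)) (P0 k)
          = (((X : Polynomial ℝ) + C (qt n)) * P0 k).coeff (n + 1) / lc0 (n + 1) := by
        rw [Stmt8Aux.inn_swap]
        refine proj0 _ (n + 1) ?_
        refine le_trans (Polynomial.natDegree_mul_le) ?_
        rw [Polynomial.natDegree_X_add_C, hdeg0 k]
        omega
      have T3 : Stmt8Aux.Inn (wgt 0 ζ) (P0 n) (P0 k) = if n = k then (1 : ℝ) else 0 :=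
        horth0' n k
      rw [T1, T2, T3]
      rcases lt_or_eq_of_le hk with hlt | heq
      · rw [Polynomial.coeff_eq_zero_of_natDegree_lt (by rw [hdeg0 k]; exact hlt),
          Polynomial.coeff_eq_zero_of_natDegree_lt
            (lt_of_le_of_lt (le_trans (Polynomial.natDegree_mul_le)
              (by rw [Polynomial.natDegree_X_add_C, hdeg0 k]; omega)) (by omega : k + 1 < n + 1)),
          if_neg (by omega)]
        ring
      · subst heq
        rw [cs0 k, Stmt8Aux.coeff_X_add_mul, cs0 k,
          Polynomial.coeff_eq_zero_of_natDegree_lt (by rw [hdeg0 k]; omega),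
          if_pos rfl, hrt k, hpt k]
        field_simp [hlc0ne, hlc1ne]
        try ring
    have hD0 := zero0 n _ hdegD hDk
    linear_combination hD0
  have hptne : ∀ m, pt m ≠ 0 :=
    fun m => by rw [hpt m]; exact ne_of_gt (div_pos (hlc1pos m) (hlc0pos (m + 1)))
  refine ⟨key1, ?_, ?_⟩
  -- ==================== Part (ii), n = -1 case ====================
  · have hP1z : P1 0 = C (lc1 0) := by
      rw [hzfac1 0, show Finset.Icc 1 0 = (∅ : Finset ℕ) from Finset.Icc_eq_empty (by omega)]
      simp
    have hqt0 : qt 0 = z0 1 1 := by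
      rw [hqt 0, show Finset.Icc 1 0 = (∅ : Finset ℕ) from Finset.Icc_eq_empty (by omega),
        Finset.Icc_self, Finset.sum_singleton, Finset.sum_empty]
      ring
    have hP01 : P0 1 = C (lc0 1) * (X - C (z0 1 1)) := by
      rw [hzfac0 1, Finset.Icc_self, Finset.prod_singleton]
    have hsc : (1 / pt 0) * lc1 0 = lc0 1 := by
      rw [hpt 0, one_div_div]
      exact div_mul_cancel₀ _ (hlc1ne 0)
    have hCC : (C (1 / pt 0) : Polynomial ℝ) * C (lc1 0) = C (lc0 1) := by
      rw [← Polynomial.C_mul, hsc]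
    rw [hP01, hP1z, hqt0]
    linear_combination (-(X - C (z0 1 1))) * hCC
  -- ==================== Part (ii), general case ====================
  · intro n
    have hdegE : (C (pt (n + 1)) * P0 (n + 2)
        - ((X : Polynomial ℝ) - C (qt (n + 1))) * P1 (n + 1)
        + C (pt (n + 1)) * (C (a1 n / a0 (n + 1) * rt (n + 1)) * P1 n)).natDegree ≤ n + 1 := by
      apply Polynomial.natDegree_le_iff_coeff_eq_zero.mpr
      intro m hm
      rw [Polynomial.coeff_add, Polynomial.coeff_sub, Polynomial.coeff_C_mul,
        Polynomial.coeff_C_mul, Polynomial.coeff_C_mul]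
      have hdB : (((X : Polynomial ℝ) - C (qt (n + 1))) * P1 (n + 1)).natDegree ≤ n + 2 := by
        refine le_trans (Polynomial.natDegree_mul_le) ?_
        rw [Polynomial.natDegree_X_sub_C, hdeg1 (n + 1)]
        omega
      rcases (by omega : m = n + 2 ∨ n + 3 ≤ m) with h | h
      · subst h
        have e1 : (P0 (n + 2)).coeff (n + 2) = lc0 (n + 2) := cs0 (n + 2)
        have e2 : (((X : Polynomial ℝ) - C (qt (n + 1))) * P1 (n + 1)).coeff (n + 2)
            = lc1 (n + 1) := by
          rw [show n + 2 = n + 1 + 1 from by omega, Stmt8Aux.coeff_X_sub_mul, cs1 (n + 1),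
            Polynomial.coeff_eq_zero_of_natDegree_lt (by rw [hdeg1 (n + 1)]; omega)]
          ring
        have e3 : (P1 n).coeff (n + 2) = 0 :=
          Polynomial.coeff_eq_zero_of_natDegree_lt (by rw [hdeg1 n]; omega)
        rw [e1, e2, e3, hpt (n + 1)]
        field_simp [hlc0ne, hlc1ne]
        try ring
      · rw [Polynomial.coeff_eq_zero_of_natDegree_lt (by rw [hdeg0 (n + 2)]; omega),
          Polynomial.coeff_eq_zero_of_natDegree_lt (lt_of_le_of_lt hdB (by omega)),
          Polynomial.coeff_eq_zero_of_natDegree_lt (by rw [hdeg1 n]; omega)]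
        ring
    have hEk : ∀ k, k ≤ n + 1 → Stmt8Aux.Inn (wgt 1 ζ)
        (C (pt (n + 1)) * P0 (n + 2)
          - ((X : Polynomial ℝ) - C (qt (n + 1))) * P1 (n + 1)
          + C (pt (n + 1)) * (C (a1 n / a0 (n + 1) * rt (n + 1)) * P1 n)) (P1 k) = 0 := by
      intro k hk
      rw [Stmt8Aux.inn_add (wgt 1 ζ) _ _ (P1 k) (int1 _ k) (int1 _ k),
        Stmt8Aux.inn_sub (wgt 1 ζ) _ _ (P1 k) (int1 _ k) (int1 _ k),
        Stmt8Aux.inn_smul, Stmt8Aux.inn_smul, Stmt8Aux.inn_smul]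
      by_cases hk1 : k = n + 1
      · subst hk1
        -- term TA via the decomposition trick
        have hRdeg : (P0 (n + 2) - C (1 / pt (n + 1)) * ((X : Polynomial ℝ) * P1 (n + 1))).natDegree
            ≤ n + 1 := by
          apply Polynomial.natDegree_le_iff_coeff_eq_zero.mpr
          intro m hm
          rw [Polynomial.coeff_sub, Polynomial.coeff_C_mul]
          have hdXP : ((X : Polynomial ℝ) * P1 (n + 1)).natDegree ≤ n + 2 := by
            refine le_trans (Polynomial.natDegree_mul_le) ?_
            rw [Polynomial.natDegree_X, hdeg1 (n + 1)]
            omega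
          rcases (by omega : m = n + 2 ∨ n + 3 ≤ m) with h | h
          · subst h
            rw [cs0 (n + 2), show n + 2 = n + 1 + 1 from by omega,
              Stmt8Aux.coeff_X_mul', cs1 (n + 1), hpt (n + 1), one_div_div,
              div_mul_cancel₀ _ (hlc1ne (n + 1)), sub_self]
          · rw [Polynomial.coeff_eq_zero_of_natDegree_lt (by rw [hdeg0 (n + 2)]; omega),
              Polynomial.coeff_eq_zero_of_natDegree_lt (lt_of_le_of_lt hdXP (by omega))]
            ring
        have TA : Stmt8Aux.Inn (wgt 1 ζ) (P0 (n + 2)) (P1 (n + 1))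
            = (1 / pt (n + 1)) * Stmt8Aux.Inn (wgt 1 ζ) ((X : Polynomial ℝ) * P1 (n + 1)) (P1 (n + 1))
              + (P0 (n + 2) - C (1 / pt (n + 1)) * ((X : Polynomial ℝ) * P1 (n + 1))).coeff (n + 1)
                / lc1 (n + 1) := by
          conv_lhs => rw [show P0 (n + 2) = C (1 / pt (n + 1)) * ((X : Polynomial ℝ) * P1 (n + 1))
            + (P0 (n + 2) - C (1 / pt (n + 1)) * ((X : Polynomial ℝ) * P1 (n + 1))) from by ring]
          rw [Stmt8Aux.inn_add (wgt 1 ζ) _ _ _ (int1 _ _) (int1 _ _), Stmt8Aux.inn_smul,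
            proj1 _ (n + 1) hRdeg]
        have hRco : (P0 (n + 2) - C (1 / pt (n + 1)) * ((X : Polynomial ℝ) * P1 (n + 1))).coeff (n + 1)
            = -(lc0 (n + 2)) * (∑ i ∈ Finset.Icc 1 (n + 2), z0 (n + 2) i)
              + (1 / pt (n + 1)) * (lc1 (n + 1) * ∑ i ∈ Finset.Icc 1 (n + 1), z1 (n + 1) i) := by
          rw [Polynomial.coeff_sub, Polynomial.coeff_C_mul, Stmt8Aux.coeff_X_mul',
            csub0 (n + 1), csub1 n]
          ring
        have TB : Stmt8Aux.Inn (wgt 1 ζ) (((X : Polynomial ℝ) - C (qt (n + 1))) * P1 (n + 1)) (P1 (n + 1))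
            = Stmt8Aux.Inn (wgt 1 ζ) ((X : Polynomial ℝ) * P1 (n + 1)) (P1 (n + 1)) - qt (n + 1) := by
          rw [show ((X : Polynomial ℝ) - C (qt (n + 1))) * P1 (n + 1)
              = (X : Polynomial ℝ) * P1 (n + 1) - C (qt (n + 1)) * P1 (n + 1) from by ring,
            Stmt8Aux.inn_sub (wgt 1 ζ) _ _ _ (int1 _ _) (int1 _ _), Stmt8Aux.inn_smul,
            horth1' (n + 1) (n + 1), if_pos rfl]
          ring
        have TC : Stmt8Aux.Inn (wgt 1 ζ) (P1 n) (P1 (n + 1)) = 0 := by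
          rw [horth1' n (n + 1), if_neg (by omega)]
        rw [TA, TB, TC, hRco, hqt (n + 1), hpt (n + 1)]
        field_simp [hlc0ne, hlc1ne]
        ring
      by_cases hk0 : k = n
      · subst k
        have TA : Stmt8Aux.Inn (wgt 1 ζ) (P0 (n + 2)) (P1 n)
            = pt n * (lc0 (n + 1) / lc0 (n + 2)) := by
          rw [Stmt8Aux.inn_comm, Stmt8Aux.bridge ζ (P1 n) (P0 (n + 2)), key1 n,
            show (C (pt n) * ((X : Polynomial ℝ) + C (qt n)) * P0 (n + 1) + C (rt n) * P0 n)
              = C (pt n) * (((X : Polynomial ℝ) + C (qt n)) * P0 (n + 1)) + C (rt n) * P0 n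
              from by ring,
            Stmt8Aux.inn_add (wgt 0 ζ) _ _ _ (int0 _ _) (int0 _ _), Stmt8Aux.inn_smul,
            Stmt8Aux.inn_smul, horth0' n (n + 2), if_neg (by omega)]
          have e : (((X : Polynomial ℝ) + C (qt n)) * P0 (n + 1)).coeff (n + 2) = lc0 (n + 1) := by
            rw [show n + 2 = n + 1 + 1 from by omega, Stmt8Aux.coeff_X_add_mul, cs0 (n + 1),
              Polynomial.coeff_eq_zero_of_natDegree_lt (by rw [hdeg0 (n + 1)]; omega)]
            ring
          rw [proj0 (((X : Polynomial ℝ) + C (qt n)) * P0 (n + 1)) (n + 2)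
              (le_trans (Polynomial.natDegree_mul_le)
                (by rw [Polynomial.natDegree_X_add_C, hdeg0 (n + 1)]; omega)), e]
          ring
        have TB : Stmt8Aux.Inn (wgt 1 ζ) (((X : Polynomial ℝ) - C (qt (n + 1))) * P1 (n + 1)) (P1 n)
            = lc1 n / lc1 (n + 1) := by
          rw [Stmt8Aux.inn_swap]
          have e : (((X : Polynomial ℝ) - C (qt (n + 1))) * P1 n).coeff (n + 1) = lc1 n := by
            rw [Stmt8Aux.coeff_X_sub_mul, cs1 n,
              Polynomial.coeff_eq_zero_of_natDegree_lt (by rw [hdeg1 n]; omega)]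
            ring
          rw [proj1 (((X : Polynomial ℝ) - C (qt (n + 1))) * P1 n) (n + 1)
              (le_trans (Polynomial.natDegree_mul_le)
                (by rw [Polynomial.natDegree_X_sub_C, hdeg1 n]; omega)), e]
        have TC : Stmt8Aux.Inn (wgt 1 ζ) (P1 n) (P1 n) = 1 := by
          rw [horth1' n n, if_pos rfl]
        rw [TA, TB, TC, hpt n, hpt (n + 1), ha1 n, ha0 (n + 1), hrt (n + 1), hpt (n + 1)]
        field_simp [hlc0ne, hlc1ne]
        ring
      · -- k < n
        have hklt : k < n := by omega
        have TA : Stmt8Aux.Inn (wgt 1 ζ) (P0 (n + 2)) (P1 k) = 0 := by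
          rw [Stmt8Aux.inn_comm, Stmt8Aux.bridge ζ (P1 k) (P0 (n + 2))]
          rw [proj0 ((X ^ 2 - 1) * P1 k) (n + 2)
              (le_trans (Polynomial.natDegree_mul_le)
                (by have := Stmt8Aux.natDegree_X2_sub_one; rw [hdeg1 k]; omega))]
          rw [Polynomial.coeff_eq_zero_of_natDegree_lt
              (lt_of_le_of_lt (le_trans (Polynomial.natDegree_mul_le)
                (by have := Stmt8Aux.natDegree_X2_sub_one; rw [hdeg1 k]; omega : ((X ^ 2 - 1 : Polynomial ℝ)).natDegree + (P1 k).natDegree ≤ 2 + k))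
                (by omega))]
          simp
        have TB : Stmt8Aux.Inn (wgt 1 ζ) (((X : Polynomial ℝ) - C (qt (n + 1))) * P1 (n + 1)) (P1 k)
            = 0 := by
          rw [Stmt8Aux.inn_swap]
          rw [proj1 (((X : Polynomial ℝ) - C (qt (n + 1))) * P1 k) (n + 1)
              (le_trans (Polynomial.natDegree_mul_le)
                (by rw [Polynomial.natDegree_X_sub_C, hdeg1 k]; omega))]
          rw [Polynomial.coeff_eq_zero_of_natDegree_lt
              (lt_of_le_of_lt (le_trans (Polynomial.natDegree_mul_le)
                (by rw [Polynomial.natDegree_X_sub_C, hdeg1 k] : ((X : Polynomial ℝ) - C (qt (n + 1))).natDegree + (P1 k).natDegree ≤ 1 + k))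
                (by omega))]
          simp
        have TC : Stmt8Aux.Inn (wgt 1 ζ) (P1 n) (P1 k) = 0 := by
          rw [horth1' n k, if_neg (by omega)]
        rw [TA, TB, TC]
        ring
    have hE0 := zero1 (n + 1) _ hdegE hEk
    have hCne : (C (pt (n + 1)) : Polynomial ℝ) ≠ 0 := by
      simpa using hptne (n + 1)
    apply mul_left_cancel₀ hCne
    have h1 : (C (pt (n + 1)) : Polynomial ℝ) * C (1 / pt (n + 1)) = 1 := by
      rw [← Polynomial.C_mul, mul_one_div, div_self (hptne (n + 1)), Polynomial.C_1]
    linear_combination hE0 - ((X - C (qt (n + 1))) * P1 (n + 1)) * h1
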